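/- Let X and M be geodesic metric spaces, x ∈ X, p ∈ M, δ₀ > 0, and 0 < η ≤ δ₀/2100. Let f : X → M and g : M → X be maps of distortion at most η with f(x) = p, g(p) = x, and d(g(f(z)), z) ≤ η for all z ∈ X. Assume that every loop in M whose image is contained in some open ball of radius δ₀/30 is null-homotopic in M, and that every loop in X whose image is contained in some open ball of radius δ₀/30 is null-homotopic in X. Let Ψ : π₁(X, x) → π₁(M, p) be the map characterized by Ψ([σ]) = [σ'] whenever σ' is a loop at p with d(σ'(t), f(σ(t))) ≤ δ₀/300 for all t, and let Φ : π₁(M, p) → π₁(X, x) be the map characterized by Φ([c]) = [c'] whenever c' is a loop at x with d(c'(t), g(c(t))) ≤ δ₀/300 for all t. Then Φ ∘ Ψ is the identity map of π₁(X, x). -/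

import Mathlib

open Set unitInterval

attribute [local instance] Path.Homotopic.setoid

/-- A metric space is geodesic if every pair of points is joined by a unit-speed
continuous path defined on `[0, dist p q]`. -/
def IsGeodesicSpace (M : Type*) [MetricSpace M] : Prop :=
  ∀ p q : M, ∃ γ : ℝ → M,
    ContinuousOn γ (Set.Icc 0 (dist p q)) ∧
    γ 0 = p ∧ γ (dist p q) = q ∧
    ∀ s ∈ Set.Icc 0 (dist p q), ∀ t ∈ Set.Icc 0 (dist p q),
      dist (γ s) (γ t) = |s - t|

/-- A map between metric spaces has distortion at most `η`. -/
def DistortionLE {X M : Type*} [MetricSpace X] [MetricSpace M]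
    (f : X → M) (η : ℝ) : Prop :=
  ∀ a b : X, |dist (f a) (f b) - dist a b| ≤ η

/-- Two loops are freely homotopic. -/
def FreelyHomotopic {Z : Type*} [TopologicalSpace Z]
    (c₀ c₁ : C(unitInterval, Z)) : Prop :=
  ∃ H : C(unitInterval × unitInterval, Z),
    (∀ t, H (t, 0) = c₀ t) ∧ (∀ t, H (t, 1) = c₁ t) ∧ (∀ s, H (0, s) = H (1, s))

/-- A loop is null-homotopic if it is freely homotopic to a constant loop. -/
def NullHomotopicLoop {Z : Type*} [TopologicalSpace Z]
    (c : C(unitInterval, Z)) : Prop :=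
  ∃ z : Z, FreelyHomotopic c (ContinuousMap.const unitInterval z)

/-- The class of a loop based at `z` in the fundamental group `π₁(Z, z)`. -/
noncomputable def loopClass {Z : Type*} [TopologicalSpace Z] {z : Z} (c : Path z z) :
    FundamentalGroup Z z :=
  FundamentalGroup.fromPath (X := TopCat.of Z) ⟦c⟧


/- Pushing a loop through a map of small distortion: subdivide the loop dyadically until each
piece has diameter at most `ε`, and replace each piece by a geodesic between the images of its
endpoints; every point of the result is then within `2 (ε + η)` of the image of the loop. Applied
to `f`, this gives a loop `c'` with `Ψ [c] = [c']`, and `g ∘ c'` stays within `6 η` of the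
original loop, so `Φ [c'] = [c]`. -/

theorem IsGeodesicSpace.exists_path_dist_le {M : Type*} [MetricSpace M] (hM : IsGeodesicSpace M)
    (p q : M) : ∃ γ : Path p q, ∀ t, dist (γ t) p ≤ dist p q := by
  obtain ⟨γ, hγc, hγ0, hγ1, hγd⟩ := hM p q
  have hmem : ∀ t : I, dist p q * t ∈ Icc 0 (dist p q) := fun t =>
    ⟨mul_nonneg dist_nonneg t.2.1, mul_le_of_le_one_right dist_nonneg t.2.2⟩
  refine ⟨⟨⟨fun t => γ (dist p q * t),
    hγc.comp_continuous (continuous_const.mul continuous_subtype_val) hmem⟩, ?_, ?_⟩, ?_⟩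
  · simpa using hγ0
  · simpa using hγ1
  · intro t
    have h := hγd _ (hmem t) 0 (left_mem_Icc.2 dist_nonneg)
    rw [hγ0, sub_zero, abs_of_nonneg (hmem t).1] at h
    exact h.trans_le (hmem t).2

theorem DistortionLE.dist_le_add {X M : Type*} [MetricSpace X] [MetricSpace M] {f : X → M}
    {η : ℝ} (hf : DistortionLE f η) (a b : X) : dist (f a) (f b) ≤ dist a b + η := by
  linarith [(abs_le.1 (hf a b)).2]

theorem Set.Icc.dist_convexComb {a b : ℝ} (x y : Icc a b) (s t : I) :
    dist (Icc.convexComb x y s) (Icc.convexComb x y t) = dist x y * dist s t := by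
  simp only [Subtype.dist_eq, Real.dist_eq, Icc.coe_convexComb, ← abs_mul]
  rw [← abs_neg]
  congr 1
  ring

section PathNearComp

variable {X M : Type*} [PseudoMetricSpace X] [MetricSpace M] {f : X → M} {ε η : ℝ}

theorem exists_path_near_comp_of_dyadic_modulus (hM : IsGeodesicSpace M)
    (hf : ∀ a b, dist (f a) (f b) ≤ dist a b + η) (n : ℕ) {a b : X} (c : Path a b)
    (hc : ∀ s t : I, dist s t ≤ (1 / 2) ^ n → dist (c s) (c t) ≤ ε) :
    ∃ c' : Path (f a) (f b), ∀ t, dist (c' t) (f (c t)) ≤ 2 * (ε + η) := by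
  induction n generalizing a b with
  | zero =>
    have hsmall : ∀ t, dist a (c t) ≤ ε := fun t => by
      simpa using hc 0 t (by simp [Subtype.dist_eq, Real.dist_eq, abs_of_nonneg t.2.1, t.2.2])
    obtain ⟨γ, hγ⟩ := hM.exists_path_dist_le (f a) (f b)
    refine ⟨γ, fun t => ?_⟩
    have hab : dist a b ≤ ε := by simpa using hsmall 1
    calc dist (γ t) (f (c t)) ≤ dist (γ t) (f a) + dist (f a) (f (c t)) := dist_triangle _ _ _
      _ ≤ (dist a b + η) + (dist a (c t) + η) := add_le_add ((hγ t).trans (hf a b)) (hf _ _)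
      _ ≤ 2 * (ε + η) := by linarith [hsmall t]
  | succ n ih =>
    have hhalf : ∀ t₀ t₁ : I, dist t₀ t₁ = 1 / 2 → ∃ c' : Path (f (c t₀)) (f (c t₁)),
        ∀ s, dist (c' s) (f (c.subpath t₀ t₁ s)) ≤ 2 * (ε + η) := fun t₀ t₁ h =>
      ih (c.subpath t₀ t₁) fun s t hst =>
        hc _ _ (by rw [Set.Icc.dist_convexComb, h, pow_succ]; linarith)
    let m : I := ⟨1 / 2, by norm_num, by norm_num⟩
    obtain ⟨c₁, hc₁⟩ := hhalf 0 m (by norm_num [Subtype.dist_eq, Real.dist_eq, m])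
    obtain ⟨c₂, hc₂⟩ := hhalf m 1 (by norm_num [Subtype.dist_eq, Real.dist_eq, m])
    refine ⟨(c₁.trans c₂).cast (by rw [c.source]) (by rw [c.target]), fun t => ?_⟩
    rw [Path.cast_coe, Path.trans_apply]
    split_ifs with ht
    · have e : c.subpath 0 m ⟨2 * t, (mul_pos_mem_iff zero_lt_two).2 ⟨t.2.1, ht⟩⟩ = c t :=
        congrArg c (Subtype.ext (by simp [m]; ring))
      rw [← e]
      exact hc₁ _
    · have e : c.subpath m 1 ⟨2 * t - 1, two_mul_sub_one_mem_iff.2 ⟨(not_le.1 ht).le, t.2.2⟩⟩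
          = c t :=
        congrArg c (Subtype.ext (by simp [m]; ring))
      rw [← e]
      exact hc₂ _

theorem exists_path_near_comp (hM : IsGeodesicSpace M)
    (hf : ∀ a b, dist (f a) (f b) ≤ dist a b + η) (hε : 0 < ε) {a b : X} (c : Path a b) :
    ∃ c' : Path (f a) (f b), ∀ t, dist (c' t) (f (c t)) ≤ 2 * (ε + η) := by
  obtain ⟨δ, hδ, hcδ⟩ := Metric.uniformContinuous_iff.1
    (CompactSpace.uniformContinuous_of_continuous c.continuous) ε hε
  obtain ⟨n, hn⟩ := exists_pow_lt_of_lt_one hδ (by norm_num : (1 / 2 : ℝ) < 1)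
  exact exists_path_near_comp_of_dyadic_modulus hM hf n c fun s t hst =>
    (hcδ (hst.trans_lt hn)).le

end PathNearComp

theorem loopClass_surjective {Z : Type*} [TopologicalSpace Z] (z : Z) :
    Function.Surjective (loopClass (z := z)) := fun a =>
  let ⟨c, hc⟩ := Quotient.exists_rep (FundamentalGroup.toPath (X := TopCat.of Z) a)
  ⟨c, by rw [loopClass, hc]⟩

theorem forward_comp_backward_eq_id_general {X M : Type*} [MetricSpace X] [MetricSpace M]
    (hM : IsGeodesicSpace M)
    (x : X) (p : M) (δ₀ η : ℝ) (hη : 0 < η) (hηδ : η ≤ δ₀ / 2100)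
    (f : X → M) (g : M → X) (hf : DistortionLE f η) (hg : DistortionLE g η)
    (hfx : f x = p)
    (hgf : ∀ z : X, dist (g (f z)) z ≤ η)
    (Ψ : FundamentalGroup X x → FundamentalGroup M p)
    (hΨ : ∀ (c : Path x x) (c' : Path p p),
      (∀ t : unitInterval, dist (c' t) (f (c t)) ≤ δ₀ / 300) →
      Ψ (loopClass c) = loopClass c')
    (Φ : FundamentalGroup M p → FundamentalGroup X x)
    (hΦ : ∀ (c : Path p p) (c' : Path x x),
      (∀ t : unitInterval, dist (c' t) (g (c t)) ≤ δ₀ / 300) →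
      Φ (loopClass c) = loopClass c') :
    ∀ a : FundamentalGroup X x, Φ (Ψ a) = a := by
  intro a
  obtain ⟨c, rfl⟩ := loopClass_surjective x a
  subst hfx
  obtain ⟨c', hc'⟩ := exists_path_near_comp hM hf.dist_le_add hη c
  have hgc' : ∀ t, dist (c t) (g (c' t)) ≤ 6 * η := fun t =>
    calc dist (c t) (g (c' t))
        ≤ dist (c t) (g (f (c t))) + dist (g (f (c t))) (g (c' t)) := dist_triangle _ _ _
      _ ≤ η + (dist (f (c t)) (c' t) + η) :=
        add_le_add ((dist_comm _ _).trans_le (hgf _)) (hg.dist_le_add _ _)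
      _ ≤ 6 * η := by linarith [dist_comm (f (c t)) (c' t), hc' t]
  rw [hΨ c c' fun t => (hc' t).trans (by linarith),
    hΦ c' c fun t => (hgc' t).trans (by linarith)]

/-- the composition of the backward map `Ψ : π₁(X,x) → π₁(M,p)` and the
forward map `Φ : π₁(M,p) → π₁(X,x)`, each characterized by sending a loop class to the
class of any `δ₀/300`-close loop drawn across the approximations `f` and `g`
respectively, is the identity of `π₁(X, x)`. -/
theorem forward_comp_backward_eq_id {X M : Type*} [MetricSpace X] [MetricSpace M]
    (hX : IsGeodesicSpace X) (hM : IsGeodesicSpace M)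
    (x : X) (p : M) (δ₀ η : ℝ) (hδ₀ : 0 < δ₀) (hη : 0 < η) (hηδ : η ≤ δ₀ / 2100)
    (f : X → M) (g : M → X) (hf : DistortionLE f η) (hg : DistortionLE g η)
    (hfx : f x = p) (hgp : g p = x)
    (hgf : ∀ z : X, dist (g (f z)) z ≤ η)
    (hcontractM : ∀ c : C(unitInterval, M), c 0 = c 1 →
      (∃ z : M, Set.range c ⊆ Metric.ball z (δ₀ / 30)) → NullHomotopicLoop c)
    (hcontractX : ∀ c : C(unitInterval, X), c 0 = c 1 →
      (∃ z : X, Set.range c ⊆ Metric.ball z (δ₀ / 30)) → NullHomotopicLoop c)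
    (Ψ : FundamentalGroup X x → FundamentalGroup M p)
    (hΨ : ∀ (c : Path x x) (c' : Path p p),
      (∀ t : unitInterval, dist (c' t) (f (c t)) ≤ δ₀ / 300) →
      Ψ (loopClass c) = loopClass c')
    (Φ : FundamentalGroup M p → FundamentalGroup X x)
    (hΦ : ∀ (c : Path p p) (c' : Path x x),
      (∀ t : unitInterval, dist (c' t) (g (c t)) ≤ δ₀ / 300) →
      Φ (loopClass c) = loopClass c') :
    ∀ a : FundamentalGroup X x, Φ (Ψ a) = a :=
  forward_comp_backward_eq_id_general hM x p δ₀ η hη hηδ f g hf hg hfx hgf Ψ hΨ Φ hΦ
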